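/- arXiv:1405.2420 — 5 statements merged into one kernel-verified Lean document; each statement's English description precedes it below -/
import Mathlib

section
/- Let X be a finite set, Y = 2^X ∪ {*}, and for each A ⊆ X define h_A : X → Y by h_A(x) = A if x ∈ A and h_A(x) = * otherwise. Then the class H = {h_A : A ⊆ X} has Natarajan dimension at most 1. -/
open Finset

/-- `C` is N-shattered by the class `H`. -/
def NShattered {X Y : Type*} [DecidableEq X] (H : Set (X → Y)) (C : Finset X) : Prop :=
  ∃ f₁ f₂ : X → Y, (∀ x ∈ C, f₁ x ≠ f₂ x) ∧
    ∀ B ⊆ C, ∃ h ∈ H, (∀ x ∈ B, h x = f₁ x) ∧ (∀ x ∈ C \ B, h x = f₂ x)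

/-- If a function of the form `h_A` takes the value `some A'` somewhere, then `A = A'`. -/
lemma cantor_aux {X : Type*} [DecidableEq X] {A A' : Finset X} {x : X}
    (h : (if x ∈ A then some A else none) = some A') : A = A' := by
  by_cases hx : x ∈ A <;> simp [hx] at h
  exact h

theorem firstCantor_natarajan_dim_le_one
    {X : Type*} [Fintype X] [DecidableEq X]
    (H : Set (X → Option (Finset X)))
    (hH : H = {h | ∃ A : Finset X, h = fun x => if x ∈ A then some A else none}) :
    ∀ C : Finset X, NShattered H C → C.card ≤ 1 := by
  intro C hC
  by_contra hcard
  push_neg at hcard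
  obtain ⟨x, hx, y, hy, hxy⟩ := Finset.one_lt_card.mp hcard
  obtain ⟨f₁, f₂, hne, hB⟩ := hC
  subst hH
  -- B = {x}
  obtain ⟨h1, ⟨A1, rfl⟩, h1B, h1C⟩ := hB {x} (by simpa using hx)
  -- B = {y}
  obtain ⟨h2, ⟨A2, rfl⟩, h2B, h2C⟩ := hB {y} (by simpa using hy)
  -- B = {x, y}
  obtain ⟨h3, ⟨A3, rfl⟩, h3B, h3C⟩ := hB {x, y}
    (by intro z hz; simp at hz; rcases hz with rfl | rfl <;> assumption)
  -- B = ∅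
  obtain ⟨h4, ⟨A4, rfl⟩, h4B, h4C⟩ := hB ∅ (Finset.empty_subset C)
  have e1x : (if x ∈ A1 then some A1 else none) = f₁ x := h1B x (by simp)
  have e1y : (if y ∈ A1 then some A1 else none) = f₂ y := h1C y (by simp [hy, hxy.symm])
  have e2x : (if x ∈ A2 then some A2 else none) = f₂ x := h2C x (by simp [hx, hxy])
  have e2y : (if y ∈ A2 then some A2 else none) = f₁ y := h2B y (by simp)
  have e3x : (if x ∈ A3 then some A3 else none) = f₁ x := h3B x (by simp)
  have e3y : (if y ∈ A3 then some A3 else none) = f₁ y := h3B y (by simp)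
  have e4x : (if x ∈ A4 then some A4 else none) = f₂ x := h4C x (by simp [hx])
  have e4y : (if y ∈ A4 then some A4 else none) = f₂ y := h4C y (by simp [hy])
  cases hfx : f₁ x with
  | some A =>
    -- h1 and h3 both equal h_A, so f₂ y = f₁ y
    have hA1 : A1 = A := cantor_aux (e1x.trans hfx)
    have hA3 : A3 = A := cantor_aux (e3x.trans hfx)
    apply hne y hy
    rw [← e3y, ← e1y, hA1, hA3]
  | none =>
    -- f₂ x ≠ none, so f₂ x = some A; h2 and h4 both equal h_A
    cases hfx2 : f₂ x with
    | none => exact hne x hx (hfx.trans hfx2.symm)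
    | some A =>
      have hA2 : A2 = A := cantor_aux (e2x.trans hfx2)
      have hA4 : A4 = A := cantor_aux (e4x.trans hfx2)
      apply hne y hy
      rw [← e2y, ← e4y, hA2, hA4]
end

section
/- Let Ỹ be a finite nonempty set, X = 2^Ỹ, and Y = Ỹ ∪ {*}. For each y ∈ Ỹ define h_y : X → Y by h_y(A) = y if y ∈ A and h_y(A) = * otherwise, and let h_* be the constant function *. Then the class H = {h_y : y ∈ Ỹ} ∪ {h_*} has Natarajan dimension at most 1. -/
open Finset

theorem secondCantor_natarajan_dim_le_one
    {Ytil : Type*} [Fintype Ytil] [DecidableEq Ytil] [Nonempty Ytil]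
    (H : Set (Finset Ytil → Option Ytil))
    (hH : H = {h | (∃ y : Ytil, h = fun A => if y ∈ A then some y else none) ∨
                   h = fun _ => none}) :
    ∀ C : Finset (Finset Ytil), NShattered H C → C.card ≤ 1 := by
  intro C hC
  by_contra hcard
  push_neg at hcard
  obtain ⟨A₁, hA₁, A₂, hA₂, hne⟩ := Finset.one_lt_card.mp hcard
  obtain ⟨f₁, f₂, hdiff, hshat⟩ := hC
  -- key: a hypothesis outputting `some a` somewhere is determined
  have key : ∀ h ∈ H, ∀ a : Ytil, ∀ A : Finset Ytil, h A = some a →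
      h = fun A' => if a ∈ A' then some a else none := by
    intro h hh a A hA
    rw [hH] at hh
    rcases hh with ⟨y, rfl⟩ | rfl
    · by_cases hy : y ∈ A
      · simp [hy] at hA
        subst hA; rfl
      · simp [hy] at hA
    · simp at hA
  -- four subsets
  obtain ⟨h₁, hh₁, h₁B, h₁c⟩ := hshat C le_rfl
  obtain ⟨h₂, hh₂, h₂B, h₂c⟩ := hshat {A₁} (Finset.singleton_subset_iff.mpr hA₁)
  obtain ⟨h₃, hh₃, h₃B, h₃c⟩ := hshat ∅ (Finset.empty_subset C)
  obtain ⟨h₄, hh₄, h₄B, h₄c⟩ := hshat {A₂} (Finset.singleton_subset_iff.mpr hA₂)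
  have hA₂mem : A₂ ∈ C \ {A₁} := Finset.mem_sdiff.mpr ⟨hA₂, by simp [hne.symm]⟩
  have hA₁mem : A₁ ∈ C \ {A₂} := Finset.mem_sdiff.mpr ⟨hA₁, by simp [hne]⟩
  rcases h : f₁ A₁ with _ | a
  · -- f₁ A₁ = none, so f₂ A₁ = some a
    rcases h' : f₂ A₁ with _ | a
    · exact hdiff A₁ hA₁ (h.trans h'.symm)
    · -- h₃ A₁ = f₂ A₁ = some a, h₄ A₁ = f₂ A₁ = some a
      have e₃ : h₃ A₁ = some a := by
        rw [h₃c A₁ (by simpa using hA₁)]; exact h'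
      have e₄ : h₄ A₁ = some a := by
        rw [h₄c A₁ hA₁mem]; exact h'
      have k₃ := key h₃ hh₃ a A₁ e₃
      have k₄ := key h₄ hh₄ a A₁ e₄
      have : f₂ A₂ = f₁ A₂ := by
        rw [← h₃c A₂ (by simpa using hA₂), ← h₄B A₂ (Finset.mem_singleton_self A₂),
          k₃, k₄]
      exact hdiff A₂ hA₂ this.symm
  · -- f₁ A₁ = some a
    have e₁ : h₁ A₁ = some a := by rw [h₁B A₁ hA₁]; exact h
    have e₂ : h₂ A₁ = some a := by rw [h₂B A₁ (Finset.mem_singleton_self A₁)]; exact h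
    have k₁ := key h₁ hh₁ a A₁ e₁
    have k₂ := key h₂ hh₂ a A₁ e₂
    have : f₁ A₂ = f₂ A₂ := by
      rw [← h₁B A₂ hA₂, ← h₂c A₂ hA₂mem, k₁, k₂]
    exact hdiff A₂ hA₂ this
end

section
/- Let Ỹ be a finite set with |Ỹ| = d ≥ 2, X = 2^Ỹ, Y = Ỹ ∪ {*}, and define h_y(A) = y if y ∈ A, * otherwise, for y ∈ Ỹ, and h_* ≡ *. Then the graph dimension of H = {h_y : y ∈ Ỹ} ∪ {h_*} is at least ⌊log₂(d)/2⌋ − 2. -/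
open Finset

/-- `C` is G-shattered by `H`. -/
def GShattered {X Y : Type*} [DecidableEq X] (H : Set (X → Y)) (C : Finset X) : Prop :=
  ∃ f : X → Y, ∀ B ⊆ C, ∃ h ∈ H, (∀ x ∈ B, h x = f x) ∧ (∀ x ∈ C \ B, h x ≠ f x)

theorem secondCantor_graph_dim_lower_bound
    {Ytil : Type*} [Fintype Ytil] [DecidableEq Ytil]
    (hd : 2 ≤ Fintype.card Ytil)
    (H : Set (Finset Ytil → Option Ytil))
    (hH : H = {h | (∃ y : Ytil, h = fun A => if y ∈ A then some y else none) ∨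
                   h = fun _ => none}) :
    ∃ C : Finset (Finset Ytil), GShattered H C ∧
      Nat.log 2 (Fintype.card Ytil) / 2 - 2 ≤ C.card := by
  subst hH
  set d := Fintype.card Ytil with hdd
  set r := Nat.log 2 d / 2 - 2 with hr
  have hcard : Fintype.card (Fin r → Bool) ≤ d := by
    rw [Fintype.card_fun, Fintype.card_bool, Fintype.card_fin]
    calc 2 ^ r ≤ 2 ^ Nat.log 2 d :=
          Nat.pow_le_pow_right (by norm_num)
            (le_trans (Nat.sub_le _ _) (Nat.div_le_self _ _))
      _ ≤ d := Nat.pow_log_le_self 2 (by omega)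
  obtain ⟨e⟩ := Function.Embedding.nonempty_of_card_le hcard
  set A : Fin r → Finset Ytil :=
    fun i => (Finset.univ.filter fun v : Fin r → Bool => v i).image e with hA
  have hmem : ∀ (v : Fin r → Bool) (i : Fin r), e v ∈ A i ↔ v i = true := by
    intro v i
    simp only [hA, Finset.mem_image, Finset.mem_filter, Finset.mem_univ, true_and]
    constructor
    · rintro ⟨w, hw, hew⟩
      rwa [e.injective hew] at hw
    · intro hv; exact ⟨v, hv, rfl⟩
  have hAinj : Function.Injective A := by
    intro i j hij
    by_contra hne
    set v : Fin r → Bool := fun k => decide (k = i) with hv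
    have h1 : e v ∈ A i := (hmem v i).2 (by simp [hv])
    rw [hij] at h1
    have h2 := (hmem v j).1 h1
    simp [hv] at h2
    exact hne h2.symm
  refine ⟨Finset.image A Finset.univ, ⟨fun _ => none, ?_⟩, ?_⟩
  · intro B hB
    set y : Ytil := e (fun i => decide (A i ∉ B)) with hy
    refine ⟨fun S => if y ∈ S then some y else none, Or.inl ⟨y, rfl⟩, ?_, ?_⟩
    · intro x hx
      obtain ⟨i, _, hi⟩ := Finset.mem_image.1 (hB hx)
      have : y ∉ x := by
        rw [← hi]
        intro hmemy
        have := (hmem _ i).1 hmemy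
        simp only [decide_eq_true_eq] at this
        exact this (hi ▸ hx)
      simp [this]
    · intro x hx
      obtain ⟨hxC, hxB⟩ := Finset.mem_sdiff.1 hx
      obtain ⟨i, _, hi⟩ := Finset.mem_image.1 hxC
      have : y ∈ x := by
        rw [← hi]
        exact (hmem _ i).2 (by simp [hi ▸ hxB])
      simp [this]
  · rw [Finset.card_image_of_injective _ hAinj, Finset.card_univ, Fintype.card_fin]
end

section
/- Let w, z ∈ ℝ^d be nonzero vectors with ⟨w, z⟩ ≤ 0, and set α = ‖w‖²/(‖z‖² + ‖w‖²). Then ‖(1−α)w + αz‖² ≤ ‖z‖²‖w‖²/(‖z‖² + ‖w‖²) < ‖w‖². -/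
open scoped RealInnerProductSpace

theorem convex_combination_norm_decrease {d : ℕ}
    (w z : EuclideanSpace ℝ (Fin d)) (hw : w ≠ 0) (hz : z ≠ 0)
    (hinner : ⟪w, z⟫ ≤ 0) (α : ℝ) (hα : α = ‖w‖ ^ 2 / (‖z‖ ^ 2 + ‖w‖ ^ 2)) :
    ‖(1 - α) • w + α • z‖ ^ 2 ≤ ‖z‖ ^ 2 * ‖w‖ ^ 2 / (‖z‖ ^ 2 + ‖w‖ ^ 2) ∧
    ‖z‖ ^ 2 * ‖w‖ ^ 2 / (‖z‖ ^ 2 + ‖w‖ ^ 2) < ‖w‖ ^ 2 := by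
  set a := ‖w‖ ^ 2 with ha
  set b := ‖z‖ ^ 2 with hb
  have ha0 : 0 < a := pow_pos (norm_pos_iff.mpr hw) 2
  have hb0 : 0 < b := pow_pos (norm_pos_iff.mpr hz) 2
  have hab : 0 < b + a := by linarith
  have hexp : ‖(1 - α) • w + α • z‖ ^ 2
      = (1 - α) ^ 2 * a + 2 * ((1 - α) * α * ⟪w, z⟫) + α ^ 2 * b := by
    rw [@norm_add_sq_real, real_inner_smul_left, real_inner_smul_right,
      norm_smul, norm_smul]
    simp [mul_pow, abs_of_nonneg, ha, hb]
    ring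
  constructor
  · rw [hexp, hα]
    have key : (1 - a / (b + a)) ^ 2 * a + (a / (b + a)) ^ 2 * b = b * a / (b + a) := by
      field_simp
      ring
    have hnn : 2 * ((1 - a / (b + a)) * (a / (b + a)) * ⟪w, z⟫) ≤ 0 := by
      have h1 : (0:ℝ) ≤ 1 - a / (b + a) := by
        rw [sub_nonneg, div_le_one hab]; linarith
      have h2 : (0:ℝ) ≤ a / (b + a) := by positivity
      nlinarith [mul_nonneg h1 h2]
    nlinarith [key]
  · rw [div_lt_iff₀ hab]
    nlinarith
end

section
/- Let {e_y}_{y∈Y} be unit vectors in ℝ^d such that |⟨e_{y₁}, e_{y₂}⟩| < 1/100 for y₁ ≠ y₂, where Y = 2^X ∪ {*} for a finite set X. Define Ψ(x, A) = e_A if x ∈ A and 0 otherwise (for A ⊆ X), and Ψ(x, *) = e_*. Then for every B ⊆ X, the vector w = (100/45)·(e_B + (1/2)e_*) has ‖w‖² ≤ 8 and satisfies the margin conditions: for x ∈ B, ⟨w, Ψ(x,B)⟩ ≥ 1 + ⟨w, Ψ(x,y)⟩ for all y ∈ Y\{B}; and for x ∉ B, ⟨w, Ψ(x,*)⟩ ≥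 1 + ⟨w, Ψ(x,y)⟩ for all y ∈ Y\{*}. -/
open Finset
open scoped RealInnerProductSpace

theorem firstCantor_realized_by_margin_class
    {X : Type*} [Fintype X] [DecidableEq X] {d : ℕ}
    (e : Option (Finset X) → EuclideanSpace ℝ (Fin d))
    (hunit : ∀ y, ‖e y‖ = 1)
    (halmost : ∀ y₁ y₂, y₁ ≠ y₂ → |⟪e y₁, e y₂⟫| < 1 / 100)
    (Ψ : X → Option (Finset X) → EuclideanSpace ℝ (Fin d))
    (hΨs : ∀ (x : X) (A : Finset X), Ψ x (some A) = if x ∈ A then e (some A) else 0)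
    (hΨn : ∀ x : X, Ψ x none = e none) :
    ∀ B : Finset X,
      ‖(100 / 45 : ℝ) • (e (some B) + (1 / 2 : ℝ) • e none)‖ ^ 2 ≤ 8 ∧
      (∀ x ∈ B, ∀ y : Option (Finset X), y ≠ some B →
        1 + ⟪(100 / 45 : ℝ) • (e (some B) + (1 / 2 : ℝ) • e none), Ψ x y⟫ ≤
          ⟪(100 / 45 : ℝ) • (e (some B) + (1 / 2 : ℝ) • e none), Ψ x (some B)⟫) ∧
      (∀ x : X, x ∉ B → ∀ y : Option (Finset X), y ≠ none →
        1 + ⟪(100 / 45 : ℝ) • (e (some B) + (1 / 2 : ℝ) • e none), Ψ x y⟫ ≤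
          ⟪(100 / 45 : ℝ) • (e (some B) + (1 / 2 : ℝ) • e none), Ψ x none⟫) := by
  intro B
  set w : EuclideanSpace ℝ (Fin d) :=
    (100 / 45 : ℝ) • (e (some B) + (1 / 2 : ℝ) • e none) with hw
  have hself : ∀ y, ⟪e y, e y⟫ = 1 := by
    intro y
    rw [real_inner_self_eq_norm_sq, hunit]; norm_num
  have key : ∀ v : EuclideanSpace ℝ (Fin d),
      ⟪w, v⟫ = (100 / 45) * (⟪e (some B), v⟫ + (1 / 2) * ⟪e none, v⟫) := by
    intro v
    simp [hw, inner_add_left, inner_smul_left]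
    ring
  have ha : |⟪e (some B), e none⟫| < 1 / 100 := halmost _ _ (by simp)
  have ha' : |⟪e none, e (some B)⟫| < 1 / 100 := halmost _ _ (by simp)
  -- ⟪w, e (some B)⟫ ≥ large
  have hwB : (100 / 45) * (199 / 200) ≤ ⟪w, e (some B)⟫ := by
    rw [key, hself]
    have := abs_lt.mp ha'
    nlinarith [this.1, this.2]
  have hwN_lo : (100 / 45) * (49 / 100) ≤ ⟪w, e none⟫ := by
    rw [key, hself]
    have := abs_lt.mp ha
    nlinarith [this.1, this.2]
  have hwN_hi : ⟪w, e none⟫ ≤ (100 / 45) * (51 / 100) := by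
    rw [key, hself]
    have := abs_lt.mp ha
    nlinarith [this.1, this.2]
  have hwA : ∀ A : Finset X, A ≠ B → ⟪w, e (some A)⟫ ≤ (100 / 45) * (3 / 200) := by
    intro A hA
    rw [key]
    have h1 := abs_lt.mp (halmost (some B) (some A) (by simpa using (Ne.symm hA)))
    have h2 := abs_lt.mp (halmost none (some A) (by simp))
    nlinarith [h1.1, h1.2, h2.1, h2.2]
  refine ⟨?_, ?_, ?_⟩
  · -- norm bound
    have : ‖w‖ ^ 2 = ⟪w, w⟫ := (real_inner_self_eq_norm_sq w).symm
    rw [this, key]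
    have e1 : ⟪e (some B), w⟫ = ⟪w, e (some B)⟫ := real_inner_comm _ _
    have e2 : ⟪e none, w⟫ = ⟪w, e none⟫ := real_inner_comm _ _
    rw [e1, e2, key, key, hself, hself]
    have := abs_lt.mp ha
    have := abs_lt.mp ha'
    nlinarith [(abs_lt.mp ha).1, (abs_lt.mp ha).2, (abs_lt.mp ha').1, (abs_lt.mp ha').2]
  · intro x hx y hy
    rw [hΨs, if_pos hx]
    match y with
    | none =>
        rw [hΨn]
        nlinarith [hwB, hwN_hi]
    | some A =>
        have hA : A ≠ B := fun h => hy (by rw [h])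
        rw [hΨs]
        by_cases hxA : x ∈ A
        · rw [if_pos hxA]
          nlinarith [hwB, hwA A hA]
        · rw [if_neg hxA, inner_zero_right]
          nlinarith [hwB]
  · intro x hx y hy
    rw [hΨn]
    match y with
    | none => exact absurd rfl hy
    | some A =>
        rw [hΨs]
        by_cases hxA : x ∈ A
        · rw [if_pos hxA]
          by_cases hAB : A = B
          · subst hAB; exact absurd hxA hx
          · nlinarith [hwN_lo, hwA A hAB]
        · rw [if_neg hxA, inner_zero_right]
          nlinarith [hwN_lo]
end
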